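/- arXiv:2505.10627 — 4 statements merged into one kernel-verified Lean document; each statement's English description precedes it below -/
import Mathlib

section
/- Let Q₂ and P₁ be complex 10×4 matrices and let Q₃, Q₄, P₃, P₄ be complex 10×1 matrices. Form the 12×6 block matrices Q̂ = [[Q₂,Q₄,Q₃],[0,1,0],[0,0,1]] and P̂ = [[P₁,P₃,P₄],[0,1,0],[0,0,1]] (block rows of sizes 10,1,1; block columns of sizes 4,1,1; the 1's are scalar entries). Assume Q̂ᵀP̂ = 0. Define the 10×10 matrices Q = (0 | Q₂ | Q₃ | Q₄) and P = (P₁ | 0 | P₃ | P₄) with block columns of sizes 4,4,1,1. Then QᵀP is the 10×10 matrix whose only nonzero entries are the (9,10) and (10,9) entries (1-based indexing), both equal to −1. In particular QᵀP − PᵀQ = 0, i.e. QᵀP is symmetric. -/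
open Matrix

/-- Column index type for the `10 × 10` matrices `Q` and `P`,
with block columns of sizes `4, 4, 1, 1`. -/
abbrev BlockIdx : Type := (Fin 4 ⊕ Fin 4) ⊕ (Fin 1 ⊕ Fin 1)

/-- `Q̂ = [[Q₂,Q₄,Q₃],[0,1,0],[0,0,1]]`, a `12 × 6` block matrix with block rows of
sizes `10, 1, 1` and block columns of sizes `4, 1, 1`. -/
def Qhat (Q₂ : Matrix (Fin 10) (Fin 4) ℂ) (Q₃ Q₄ : Matrix (Fin 10) (Fin 1) ℂ) :
    Matrix (Fin 10 ⊕ (Fin 1 ⊕ Fin 1)) (Fin 4 ⊕ (Fin 1 ⊕ Fin 1)) ℂ :=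
  Matrix.fromBlocks Q₂ (Matrix.of fun i => Sum.elim (Q₄ i) (Q₃ i)) 0 1

/-- `P̂ = [[P₁,P₃,P₄],[0,1,0],[0,0,1]]`, a `12 × 6` block matrix with block rows of
sizes `10, 1, 1` and block columns of sizes `4, 1, 1`. -/
def Phat (P₁ : Matrix (Fin 10) (Fin 4) ℂ) (P₃ P₄ : Matrix (Fin 10) (Fin 1) ℂ) :
    Matrix (Fin 10 ⊕ (Fin 1 ⊕ Fin 1)) (Fin 4 ⊕ (Fin 1 ⊕ Fin 1)) ℂ :=
  Matrix.fromBlocks P₁ (Matrix.of fun i => Sum.elim (P₃ i) (P₄ i)) 0 1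

/-- `Q = (0 | Q₂ | Q₃ | Q₄)` with block columns of sizes `4, 4, 1, 1`. -/
def Qmat (Q₂ : Matrix (Fin 10) (Fin 4) ℂ) (Q₃ Q₄ : Matrix (Fin 10) (Fin 1) ℂ) :
    Matrix (Fin 10) BlockIdx ℂ :=
  Matrix.of fun i => Sum.elim (Sum.elim (fun _ => 0) (Q₂ i)) (Sum.elim (Q₃ i) (Q₄ i))

/-- `P = (P₁ | 0 | P₃ | P₄)` with block columns of sizes `4, 4, 1, 1`. -/
def Pmat (P₁ : Matrix (Fin 10) (Fin 4) ℂ) (P₃ P₄ : Matrix (Fin 10) (Fin 1) ℂ) :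
    Matrix (Fin 10) BlockIdx ℂ :=
  Matrix.of fun i => Sum.elim (Sum.elim (P₁ i) (fun _ => 0)) (Sum.elim (P₃ i) (P₄ i))

/-- The `10 × 10` matrix whose only nonzero entries are the `(9,10)` and `(10,9)` entries
(`1`-based indexing, i.e. the positions `inr (inl 0)` and `inr (inr 0)`), both equal to `-1`. -/
def sigmaMat : Matrix BlockIdx BlockIdx ℂ :=
  Matrix.of fun j k =>
    if (j = Sum.inr (Sum.inl 0) ∧ k = Sum.inr (Sum.inr 0)) ∨
        (j = Sum.inr (Sum.inr 0) ∧ k = Sum.inr (Sum.inl 0)) then -1 else 0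

theorem stmt0 (Q₂ P₁ : Matrix (Fin 10) (Fin 4) ℂ) (Q₃ Q₄ P₃ P₄ : Matrix (Fin 10) (Fin 1) ℂ)
    (h : (Qhat Q₂ Q₃ Q₄)ᵀ * Phat P₁ P₃ P₄ = 0) :
    (Qmat Q₂ Q₃ Q₄)ᵀ * Pmat P₁ P₃ P₄ = sigmaMat ∧
    (Qmat Q₂ Q₃ Q₄)ᵀ * Pmat P₁ P₃ P₄ - (Pmat P₁ P₃ P₄)ᵀ * Qmat Q₂ Q₃ Q₄ = 0 := by
  have key : ∀ a b, ((Qhat Q₂ Q₃ Q₄)ᵀ * Phat P₁ P₃ P₄) a b = 0 := fun a b => by rw [h]; rfl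
  have e1 : ∀ a b, ∑ x, Q₂ x a * P₁ x b = 0 := fun a b => by
    simpa [Qhat, Phat, Matrix.mul_apply, Fintype.sum_sum_type] using key (Sum.inl a) (Sum.inl b)
  have e2 : ∀ a, ∑ x, Q₂ x a * P₃ x 0 = 0 := fun a => by
    simpa [Qhat, Phat, Matrix.mul_apply, Fintype.sum_sum_type] using
      key (Sum.inl a) (Sum.inr (Sum.inl 0))
  have e3 : ∀ a, ∑ x, Q₂ x a * P₄ x 0 = 0 := fun a => by
    simpa [Qhat, Phat, Matrix.mul_apply, Fintype.sum_sum_type] using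
      key (Sum.inl a) (Sum.inr (Sum.inr 0))
  have e4 : ∀ b, ∑ x, Q₄ x 0 * P₁ x b = 0 := fun b => by
    simpa [Qhat, Phat, Matrix.mul_apply, Fintype.sum_sum_type] using
      key (Sum.inr (Sum.inl 0)) (Sum.inl b)
  have e5 : ∀ b, ∑ x, Q₃ x 0 * P₁ x b = 0 := fun b => by
    simpa [Qhat, Phat, Matrix.mul_apply, Fintype.sum_sum_type] using
      key (Sum.inr (Sum.inr 0)) (Sum.inl b)
  have e6 : ∑ x, Q₄ x 0 * P₃ x 0 = -1 := by
    have := key (Sum.inr (Sum.inl 0)) (Sum.inr (Sum.inl 0))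
    simp [Qhat, Phat, Matrix.mul_apply, Fintype.sum_sum_type] at this
    linear_combination this
  have e7 : ∑ x, Q₄ x 0 * P₄ x 0 = 0 := by
    have := key (Sum.inr (Sum.inl 0)) (Sum.inr (Sum.inr 0))
    simp [Qhat, Phat, Matrix.mul_apply, Fintype.sum_sum_type] at this
    linear_combination this
  have e8 : ∑ x, Q₃ x 0 * P₃ x 0 = 0 := by
    have := key (Sum.inr (Sum.inr 0)) (Sum.inr (Sum.inl 0))
    simp [Qhat, Phat, Matrix.mul_apply, Fintype.sum_sum_type] at this
    linear_combination this
  have e9 : ∑ x, Q₃ x 0 * P₄ x 0 = -1 := by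
    have := key (Sum.inr (Sum.inr 0)) (Sum.inr (Sum.inr 0))
    simp [Qhat, Phat, Matrix.mul_apply, Fintype.sum_sum_type] at this
    linear_combination this
  have eQP : (Qmat Q₂ Q₃ Q₄)ᵀ * Pmat P₁ P₃ P₄ = sigmaMat := by
    ext j k
    rcases j with (j | j) | (j | j) <;> rcases k with (k | k) | (k | k) <;>
      simp [Qmat, Pmat, sigmaMat, Matrix.mul_apply, Fin.eq_zero,
        e1, e2, e3, e4, e5, e6, e7, e8, e9]
  refine ⟨eQP, ?_⟩
  have hPQ : (Pmat P₁ P₃ P₄)ᵀ * Qmat Q₂ Q₃ Q₄ = ((Qmat Q₂ Q₃ Q₄)ᵀ * Pmat P₁ P₃ P₄)ᵀ := by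
    rw [Matrix.transpose_mul, Matrix.transpose_transpose]
  rw [eQP, hPQ, eQP]
  ext j k
  simp only [Matrix.sub_apply, Matrix.transpose_apply, Matrix.zero_apply, sigmaMat,
    Matrix.of_apply]
  have : ((j = Sum.inr (Sum.inl 0) ∧ k = Sum.inr (Sum.inr 0)) ∨
      (j = Sum.inr (Sum.inr 0) ∧ k = Sum.inr (Sum.inl 0))) ↔
      ((k = Sum.inr (Sum.inl 0) ∧ j = Sum.inr (Sum.inr 0)) ∨
      (k = Sum.inr (Sum.inr 0) ∧ j = Sum.inr (Sum.inl 0))) := by tauto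
  rw [if_congr this rfl rfl, sub_self]
end

section
/- Let Q₂ and P₁ be complex 10×4 matrices and let Q₃, Q₄, P₃, P₄ be complex 10×1 matrices. Form the 12×6 block matrices Q̂ = [[Q₂,Q₄,Q₃],[0,1,0],[0,0,1]] and P̂ = [[P₁,P₃,P₄],[0,1,0],[0,0,1]], and assume Q̂ᵀP̂ = 0. Define the 10×10 matrices Q = (0 | Q₂ | Q₃ | Q₄) and P = (P₁ | 0 | P₃ | P₄) with block columns of sizes 4,4,1,1, and let A₁ ⊆ ℂ¹⁰ × ℂ¹⁰ be the image of the linear map x ↦ (Qx, Px). Then: (i) A₁ is isotropic for the symplectic form ω((u,v),(u',v')) = uᵀv' − u'ᵀv on ℂ¹⁰ × ℂ¹⁰; (ii) if x ↦ (Qx,Px) is injective, then A₁ has dimension 10, hence is Lagrangian; (iii) if moreover Q₂ and P₁ each have rank 4, then the intersections A₁ ∩ (ℂ¹⁰ × {0}) and A₁ ∩ ({0} × ℂ¹⁰) each have dimension at least 4. -/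
open Matrix

/-- The linear map `x ↦ (Qx, Px)` from `ℂ¹⁰` to `ℂ¹⁰ × ℂ¹⁰`. -/
noncomputable def QPmap (Q₂ P₁ : Matrix (Fin 10) (Fin 4) ℂ)
    (Q₃ Q₄ P₃ P₄ : Matrix (Fin 10) (Fin 1) ℂ) :
    (BlockIdx → ℂ) →ₗ[ℂ] (Fin 10 → ℂ) × (Fin 10 → ℂ) :=
  ((Qmat Q₂ Q₃ Q₄).mulVecLin).prod ((Pmat P₁ P₃ P₄).mulVecLin)

/-- The subspace `A₁ ⊆ ℂ¹⁰ × ℂ¹⁰`, the image of the linear map `x ↦ (Qx, Px)`. -/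
noncomputable def A₁ (Q₂ P₁ : Matrix (Fin 10) (Fin 4) ℂ)
    (Q₃ Q₄ P₃ P₄ : Matrix (Fin 10) (Fin 1) ℂ) :
    Submodule ℂ ((Fin 10 → ℂ) × (Fin 10 → ℂ)) :=
  LinearMap.range (QPmap Q₂ P₁ Q₃ Q₄ P₃ P₄)

/-- Extension by zero onto the first `Fin 4` block of `BlockIdx`. -/
def jone : (Fin 4 → ℂ) →ₗ[ℂ] (BlockIdx → ℂ) where
  toFun x := Sum.elim (Sum.elim x 0) 0
  map_add' x y := by ext b; rcases b with (a | a) | (a | a) <;> simp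
  map_smul' c x := by ext b; rcases b with (a | a) | (a | a) <;> simp

/-- Extension by zero onto the second `Fin 4` block of `BlockIdx`. -/
def jtwo : (Fin 4 → ℂ) →ₗ[ℂ] (BlockIdx → ℂ) where
  toFun x := Sum.elim (Sum.elim 0 x) 0
  map_add' x y := by ext b; rcases b with (a | a) | (a | a) <;> simp
  map_smul' c x := by ext b; rcases b with (a | a) | (a | a) <;> simp

theorem stmt1 (Q₂ P₁ : Matrix (Fin 10) (Fin 4) ℂ) (Q₃ Q₄ P₃ P₄ : Matrix (Fin 10) (Fin 1) ℂ)
    (h : (Qhat Q₂ Q₃ Q₄)ᵀ * Phat P₁ P₃ P₄ = 0) :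
    -- (i) `A₁` is isotropic for the symplectic form `ω((u,v),(u',v')) = uᵀv' − u'ᵀv`
    (∀ p ∈ A₁ Q₂ P₁ Q₃ Q₄ P₃ P₄, ∀ q ∈ A₁ Q₂ P₁ Q₃ Q₄ P₃ P₄,
      (∑ i, p.1 i * q.2 i) - (∑ i, q.1 i * p.2 i) = 0) ∧
    -- (ii) if `x ↦ (Qx,Px)` is injective then `A₁` has dimension `10`
    (Function.Injective (QPmap Q₂ P₁ Q₃ Q₄ P₃ P₄) →
      Module.finrank ℂ ↥(A₁ Q₂ P₁ Q₃ Q₄ P₃ P₄) = 10) ∧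
    -- (iii) if `Q₂` and `P₁` have rank `4`, then `A₁ ∩ (ℂ¹⁰ × {0})` and
    -- `A₁ ∩ ({0} × ℂ¹⁰)` each have dimension at least `4`
    (Q₂.rank = 4 → P₁.rank = 4 →
      4 ≤ Module.finrank ℂ ↥(A₁ Q₂ P₁ Q₃ Q₄ P₃ P₄ ⊓
            Submodule.prod (⊤ : Submodule ℂ (Fin 10 → ℂ)) (⊥ : Submodule ℂ (Fin 10 → ℂ))) ∧
      4 ≤ Module.finrank ℂ ↥(A₁ Q₂ P₁ Q₃ Q₄ P₃ P₄ ⊓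
            Submodule.prod (⊥ : Submodule ℂ (Fin 10 → ℂ)) (⊤ : Submodule ℂ (Fin 10 → ℂ)))) := by
  -- scalar consequences of h
  have h11 : ∀ a b, ∑ i, Q₂ i a * P₁ i b = 0 := by
    intro a b
    have := congrFun (congrFun h (Sum.inl a)) (Sum.inl b)
    simpa [Qhat, Phat, Matrix.mul_apply, Fintype.sum_sum_type, Matrix.fromBlocks] using this
  have h43 : ∀ a b : Fin 1, ∑ i, Q₄ i a * P₃ i b = -1 := by
    intro a b
    obtain rfl : a = 0 := Subsingleton.elim a 0
    obtain rfl : b = 0 := Subsingleton.elim b 0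
    have := congrFun (congrFun h (Sum.inr (Sum.inl 0))) (Sum.inr (Sum.inl 0))
    simp [Qhat, Phat, Matrix.mul_apply, Fintype.sum_sum_type, Matrix.fromBlocks,
      Matrix.one_apply] at this
    linear_combination this
  have h44 : ∀ a b : Fin 1, ∑ i, Q₄ i a * P₄ i b = 0 := by
    intro a b
    obtain rfl : a = 0 := Subsingleton.elim a 0
    obtain rfl : b = 0 := Subsingleton.elim b 0
    have := congrFun (congrFun h (Sum.inr (Sum.inl 0))) (Sum.inr (Sum.inr 0))
    simp [Qhat, Phat, Matrix.mul_apply, Fintype.sum_sum_type, Matrix.fromBlocks,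
      Matrix.one_apply] at this
    linear_combination this
  have h33 : ∀ a b : Fin 1, ∑ i, Q₃ i a * P₃ i b = 0 := by
    intro a b
    obtain rfl : a = 0 := Subsingleton.elim a 0
    obtain rfl : b = 0 := Subsingleton.elim b 0
    have := congrFun (congrFun h (Sum.inr (Sum.inr 0))) (Sum.inr (Sum.inl 0))
    simp [Qhat, Phat, Matrix.mul_apply, Fintype.sum_sum_type, Matrix.fromBlocks,
      Matrix.one_apply] at this
    linear_combination this
  have h34 : ∀ a b : Fin 1, ∑ i, Q₃ i a * P₄ i b = -1 := by
    intro a b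
    obtain rfl : a = 0 := Subsingleton.elim a 0
    obtain rfl : b = 0 := Subsingleton.elim b 0
    have := congrFun (congrFun h (Sum.inr (Sum.inr 0))) (Sum.inr (Sum.inr 0))
    simp [Qhat, Phat, Matrix.mul_apply, Fintype.sum_sum_type, Matrix.fromBlocks,
      Matrix.one_apply] at this
    linear_combination this
  have h23 : ∀ a (b : Fin 1), ∑ i, Q₂ i a * P₃ i b = 0 := by
    intro a b
    obtain rfl : b = 0 := Subsingleton.elim b 0
    have := congrFun (congrFun h (Sum.inl a)) (Sum.inr (Sum.inl 0))
    simpa [Qhat, Phat, Matrix.mul_apply, Fintype.sum_sum_type, Matrix.fromBlocks] using this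
  have h24 : ∀ a (b : Fin 1), ∑ i, Q₂ i a * P₄ i b = 0 := by
    intro a b
    obtain rfl : b = 0 := Subsingleton.elim b 0
    have := congrFun (congrFun h (Sum.inl a)) (Sum.inr (Sum.inr 0))
    simpa [Qhat, Phat, Matrix.mul_apply, Fintype.sum_sum_type, Matrix.fromBlocks] using this
  have h41 : ∀ (a : Fin 1) b, ∑ i, Q₄ i a * P₁ i b = 0 := by
    intro a b
    obtain rfl : a = 0 := Subsingleton.elim a 0
    have := congrFun (congrFun h (Sum.inr (Sum.inl 0))) (Sum.inl b)
    simpa [Qhat, Phat, Matrix.mul_apply, Fintype.sum_sum_type, Matrix.fromBlocks] using this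
  have h31 : ∀ (a : Fin 1) b, ∑ i, Q₃ i a * P₁ i b = 0 := by
    intro a b
    obtain rfl : a = 0 := Subsingleton.elim a 0
    have := congrFun (congrFun h (Sum.inr (Sum.inr 0))) (Sum.inl b)
    simpa [Qhat, Phat, Matrix.mul_apply, Fintype.sum_sum_type, Matrix.fromBlocks] using this
  -- symmetry of QᵀP
  have hsym : (Qmat Q₂ Q₃ Q₄)ᵀ * Pmat P₁ P₃ P₄ = (Pmat P₁ P₃ P₄)ᵀ * Qmat Q₂ Q₃ Q₄ := by
    have h11c : ∀ a b, ∑ i, P₁ i b * Q₂ i a = 0 := fun a b => by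
      rw [← h11 a b]; exact Finset.sum_congr rfl fun i _ => mul_comm _ _
    have h43c : ∀ a b : Fin 1, ∑ i, P₃ i b * Q₄ i a = -1 := fun a b => by
      rw [← h43 a b]; exact Finset.sum_congr rfl fun i _ => mul_comm _ _
    have h44c : ∀ a b : Fin 1, ∑ i, P₄ i b * Q₄ i a = 0 := fun a b => by
      rw [← h44 a b]; exact Finset.sum_congr rfl fun i _ => mul_comm _ _
    have h33c : ∀ a b : Fin 1, ∑ i, P₃ i b * Q₃ i a = 0 := fun a b => by
      rw [← h33 a b]; exact Finset.sum_congr rfl fun i _ => mul_comm _ _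
    have h34c : ∀ a b : Fin 1, ∑ i, P₄ i b * Q₃ i a = -1 := fun a b => by
      rw [← h34 a b]; exact Finset.sum_congr rfl fun i _ => mul_comm _ _
    have h23c : ∀ a (b : Fin 1), ∑ i, P₃ i b * Q₂ i a = 0 := fun a b => by
      rw [← h23 a b]; exact Finset.sum_congr rfl fun i _ => mul_comm _ _
    have h24c : ∀ a (b : Fin 1), ∑ i, P₄ i b * Q₂ i a = 0 := fun a b => by
      rw [← h24 a b]; exact Finset.sum_congr rfl fun i _ => mul_comm _ _
    have h41c : ∀ (a : Fin 1) b, ∑ i, P₁ i b * Q₄ i a = 0 := fun a b => by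
      rw [← h41 a b]; exact Finset.sum_congr rfl fun i _ => mul_comm _ _
    have h31c : ∀ (a : Fin 1) b, ∑ i, P₁ i b * Q₃ i a = 0 := fun a b => by
      rw [← h31 a b]; exact Finset.sum_congr rfl fun i _ => mul_comm _ _
    ext a b
    rcases a with (a | a) | (a | a) <;> rcases b with (b | b) | (b | b) <;>
      simp only [Matrix.mul_apply, Matrix.transpose_apply, Qmat, Pmat, Matrix.of_apply,
        Sum.elim_inl, Sum.elim_inr] <;>
      (try simp only [zero_mul, mul_zero, Finset.sum_const_zero]) <;>
      first
        | rfl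
        | rw [h11] | rw [h11c] | rw [h23, h23c] | rw [h24, h24c] | rw [h31, h31c]
        | rw [h41, h41c] | rw [h33, h33c] | rw [h44, h44c] | rw [h43, h34c] | rw [h34, h43c]
        | rw [h23] | rw [h23c] | rw [h24] | rw [h24c] | rw [h31] | rw [h31c]
        | rw [h41] | rw [h41c]
  refine ⟨?_, ?_, ?_⟩
  · -- (i) isotropy
    rintro p ⟨x, rfl⟩ q ⟨y, rfl⟩
    show ((Qmat Q₂ Q₃ Q₄) *ᵥ x ⬝ᵥ ((Pmat P₁ P₃ P₄) *ᵥ y)) -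
      ((Qmat Q₂ Q₃ Q₄) *ᵥ y ⬝ᵥ ((Pmat P₁ P₃ P₄) *ᵥ x)) = 0
    have e1 : ∀ u v : BlockIdx → ℂ,
        (Qmat Q₂ Q₃ Q₄) *ᵥ u ⬝ᵥ ((Pmat P₁ P₃ P₄) *ᵥ v) =
        (((Pmat P₁ P₃ P₄)ᵀ * Qmat Q₂ Q₃ Q₄) *ᵥ u) ⬝ᵥ v := by
      intro u v
      rw [Matrix.dotProduct_mulVec, ← Matrix.mulVec_transpose, ← Matrix.mulVec_mulVec]
    rw [e1, e1, sub_eq_zero,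
      dotProduct_comm (((Pmat P₁ P₃ P₄)ᵀ * Qmat Q₂ Q₃ Q₄) *ᵥ y) x,
      Matrix.dotProduct_mulVec x, ← Matrix.mulVec_transpose, Matrix.transpose_mul,
      Matrix.transpose_transpose, hsym]
  · -- (ii) Lagrangian dimension
    intro hinj
    rw [A₁, LinearMap.finrank_range_of_inj hinj]
    simp [Module.finrank_fintype_fun_eq_card]
  · -- (iii)
    intro hQ2 hP1
    constructor
    · -- A₁ ∩ (ℂ¹⁰ × 0) via jtwo (the Q₂ block; P vanishes there)
      set T := (QPmap Q₂ P₁ Q₃ Q₄ P₃ P₄).comp jtwo with hT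
      have hPz : ∀ x : Fin 4 → ℂ, (Pmat P₁ P₃ P₄) *ᵥ (jtwo x) = 0 := by
        intro x; ext i
        simp [Pmat, jtwo, Matrix.mulVec, dotProduct, Fintype.sum_sum_type]
      have hle : LinearMap.range T ≤ A₁ Q₂ P₁ Q₃ Q₄ P₃ P₄ ⊓
          Submodule.prod (⊤ : Submodule ℂ (Fin 10 → ℂ)) (⊥ : Submodule ℂ (Fin 10 → ℂ)) := by
        rintro _ ⟨x, rfl⟩
        refine ⟨⟨jtwo x, rfl⟩, trivial, ?_⟩
        show (Pmat P₁ P₃ P₄) *ᵥ (jtwo x) ∈ (⊥ : Submodule ℂ (Fin 10 → ℂ))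
        simp [hPz x]
      have hmap : Submodule.map (LinearMap.fst ℂ (Fin 10 → ℂ) (Fin 10 → ℂ))
          (LinearMap.range T) = LinearMap.range Q₂.mulVecLin := by
        rw [← LinearMap.range_comp]
        congr 1
        ext x i
        simp [hT, QPmap, jtwo, Qmat, Matrix.mulVec, dotProduct, Fintype.sum_sum_type,
          Pi.single_apply, Finset.sum_ite_eq', mul_comm]
      have h1 : Q₂.rank ≤ Module.finrank ℂ ↥(LinearMap.range T) := by
        rw [Matrix.rank, ← hmap]
        exact Submodule.finrank_map_le _ _
      calc (4 : ℕ) = Q₂.rank := hQ2.symm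
        _ ≤ Module.finrank ℂ ↥(LinearMap.range T) := h1
        _ ≤ _ := Submodule.finrank_mono hle
    · -- A₁ ∩ (0 × ℂ¹⁰) via jone (the P₁ block; Q vanishes there)
      set T := (QPmap Q₂ P₁ Q₃ Q₄ P₃ P₄).comp jone with hT
      have hQz : ∀ x : Fin 4 → ℂ, (Qmat Q₂ Q₃ Q₄) *ᵥ (jone x) = 0 := by
        intro x; ext i
        simp [Qmat, jone, Matrix.mulVec, dotProduct, Fintype.sum_sum_type]
      have hle : LinearMap.range T ≤ A₁ Q₂ P₁ Q₃ Q₄ P₃ P₄ ⊓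
          Submodule.prod (⊥ : Submodule ℂ (Fin 10 → ℂ)) (⊤ : Submodule ℂ (Fin 10 → ℂ)) := by
        rintro _ ⟨x, rfl⟩
        refine ⟨⟨jone x, rfl⟩, ?_, trivial⟩
        show (Qmat Q₂ Q₃ Q₄) *ᵥ (jone x) ∈ (⊥ : Submodule ℂ (Fin 10 → ℂ))
        simp [hQz x]
      have hmap : Submodule.map (LinearMap.snd ℂ (Fin 10 → ℂ) (Fin 10 → ℂ))
          (LinearMap.range T) = LinearMap.range P₁.mulVecLin := by
        rw [← LinearMap.range_comp]
        congr 1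
        ext x i
        simp [hT, QPmap, jone, Pmat, Matrix.mulVec, dotProduct, Fintype.sum_sum_type,
          Pi.single_apply, Finset.sum_ite_eq', mul_comm]
      have h1 : P₁.rank ≤ Module.finrank ℂ ↥(LinearMap.range T) := by
        rw [Matrix.rank, ← hmap]
        exact Submodule.finrank_map_le _ _
      calc (4 : ℕ) = P₁.rank := hP1.symm
        _ ≤ Module.finrank ℂ ↥(LinearMap.range T) := h1
        _ ≤ _ := Submodule.finrank_mono hle
end

section
/- Let Q₂ and P₁ be complex 10×4 matrices and let Q₃, Q₄, P₃, P₄ be complex 10×1 matrices. Form the 12×6 block matrices Q̂ = [[Q₂,Q₄,Q₃],[0,1,0],[0,0,1]] and P̂ = [[P₁,P₃,P₄],[0,1,0],[0,0,1]], and assume Q̂ᵀP̂ = 0. Define the 10×10 matrices Q = (0 | Q₂ | Q₃ | Q₄) and P = (P₁ | 0 | P₃ | P₄) with block columns of sizes 4,4,1,1. Then for every vector a ∈ ℂ¹⁰, one has Σ_{i=1}^{10} (Qa)ᵢ (Pa)ᵢ = −2·a₉·a₁₀, where a₉, a₁₀ denote the last two coordinates of a. -/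
open Matrix

/-- For every vector `a ∈ ℂ¹⁰`, `Σᵢ (Qa)ᵢ (Pa)ᵢ = −2·a₉·a₁₀`, where `a₉, a₁₀` are the last
two coordinates of `a` (at positions `inr (inl 0)` and `inr (inr 0)`). -/
theorem stmt3 (Q₂ P₁ : Matrix (Fin 10) (Fin 4) ℂ) (Q₃ Q₄ P₃ P₄ : Matrix (Fin 10) (Fin 1) ℂ)
    (h : (Qhat Q₂ Q₃ Q₄)ᵀ * Phat P₁ P₃ P₄ = 0) :
    ∀ a : BlockIdx → ℂ,
      (∑ i : Fin 10, (Qmat Q₂ Q₃ Q₄).mulVec a i * (Pmat P₁ P₃ P₄).mulVec a i) =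
        -2 * a (Sum.inr (Sum.inl 0)) * a (Sum.inr (Sum.inr 0)) := by
  -- entrywise form of the Gale condition
  have h' : ∀ j k, ∑ i : Fin 10 ⊕ (Fin 1 ⊕ Fin 1),
      Qhat Q₂ Q₃ Q₄ i j * Phat P₁ P₃ P₄ i k = 0 := by
    intro j k
    have := congrFun (congrFun h j) k
    simpa [Matrix.mul_apply, Matrix.transpose_apply] using this
  intro a
  set M : Matrix BlockIdx BlockIdx ℂ :=
    Matrix.of (fun j k =>
      match j, k with
      | Sum.inr (Sum.inl _), Sum.inr (Sum.inr _) => (-1 : ℂ)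
      | Sum.inr (Sum.inr _), Sum.inr (Sum.inl _) => (-1 : ℂ)
      | _, _ => 0) with hM
  have key : (Qmat Q₂ Q₃ Q₄)ᵀ * Pmat P₁ P₃ P₄ = M := by
    ext j k
    have e := fun j k => h' j k
    rcases j with (j | j) | (j | j) <;> rcases k with (k | k) | (k | k) <;>
      simp only [Matrix.mul_apply, Matrix.transpose_apply, Qmat, Pmat, hM, Matrix.of_apply,
        Sum.elim_inl, Sum.elim_inr, mul_zero, zero_mul, Finset.sum_const_zero]
    · -- Q₂ᵀ P₁
      have := h' (Sum.inl j) (Sum.inl k)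
      simpa [Qhat, Phat, Fintype.sum_sum_type, Matrix.fromBlocks] using this
    · -- Q₂ᵀ P₃
      have := h' (Sum.inl j) (Sum.inr (Sum.inl k))
      simpa [Qhat, Phat, Fintype.sum_sum_type, Matrix.fromBlocks] using this
    · -- Q₂ᵀ P₄
      have := h' (Sum.inl j) (Sum.inr (Sum.inr k))
      simpa [Qhat, Phat, Fintype.sum_sum_type, Matrix.fromBlocks] using this
    · -- Q₃ᵀ P₁
      have := h' (Sum.inr (Sum.inr j)) (Sum.inl k)
      simpa [Qhat, Phat, Fintype.sum_sum_type, Matrix.fromBlocks] using this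
    · -- Q₃ᵀ P₃
      have := h' (Sum.inr (Sum.inr j)) (Sum.inr (Sum.inl k))
      simpa [Qhat, Phat, Fintype.sum_sum_type, Matrix.fromBlocks, Fin.fin_one_eq_zero]
        using this
    · -- Q₃ᵀ P₄ = -1
      have := h' (Sum.inr (Sum.inr j)) (Sum.inr (Sum.inr k))
      have h2 : ∑ i : Fin 10, Q₃ i j * P₄ i k + 1 = 0 := by
        simpa [Qhat, Phat, Fintype.sum_sum_type, Matrix.fromBlocks, Matrix.one_apply,
          Fin.fin_one_eq_zero] using this
      linear_combination h2
    · -- Q₄ᵀ P₁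
      have := h' (Sum.inr (Sum.inl j)) (Sum.inl k)
      simpa [Qhat, Phat, Fintype.sum_sum_type, Matrix.fromBlocks] using this
    · -- Q₄ᵀ P₃ = -1
      have := h' (Sum.inr (Sum.inl j)) (Sum.inr (Sum.inl k))
      have h2 : ∑ i : Fin 10, Q₄ i j * P₃ i k + 1 = 0 := by
        simpa [Qhat, Phat, Fintype.sum_sum_type, Matrix.fromBlocks, Matrix.one_apply,
          Fin.fin_one_eq_zero] using this
      linear_combination h2
    · -- Q₄ᵀ P₄
      have := h' (Sum.inr (Sum.inl j)) (Sum.inr (Sum.inr k))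
      simpa [Qhat, Phat, Fintype.sum_sum_type, Matrix.fromBlocks, Matrix.one_apply,
        Fin.fin_one_eq_zero] using this
  have main : (∑ i : Fin 10, (Qmat Q₂ Q₃ Q₄).mulVec a i * (Pmat P₁ P₃ P₄).mulVec a i)
      = a ⬝ᵥ M.mulVec a := by
    rw [← key, ← Matrix.mulVec_mulVec, Matrix.dotProduct_mulVec, Matrix.vecMul_transpose]
    rfl
  rw [main]
  simp [dotProduct, Matrix.mulVec, hM, Fintype.sum_sum_type, Fin.sum_univ_succ]
  ring
end

section
/- Let A = ℤ/2ℤ × ℤ/2ℤ and B = ℤ/3ℤ. Fix an automorphism α of A and an automorphism β of B, and define the subgroups of (A × B) × (A × B × B): H = {((a,b),(α(a), β(b), 0)) : a ∈ A, b ∈ B} and H' = {((a,b),(α(a), 0, β(b))) : a ∈ A, b ∈ B}. For φ an automorphism of A and ε, δ automorphisms of B, let T(φ,ε,δ) be the automorphism of (A × B) × (A × B × B) sending ((a,b),(a',b',b'')) to ((φ(a), ε(b)), (a', δ(b'), δ(b''))). Then T(φ,ε,δ) maps H onto H if and only if φ = id and ε = δ; and likewise T(φ,ε,δ) maps H' onto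 H' if and only if φ = id and ε = δ. -/
/-!
Both `H` and `H'` are graphs `{(x, γ x)}` of maps `γ` on `A × B`, and `T(φ,ε,δ)` is a product
map `σ × τ` with `σ = φ × ε` bijective, so `T` preserves the graph exactly when
`τ ∘ γ = γ ∘ σ`. On the `A`-coordinate this reads `α = α ∘ φ`, i.e. `φ = id`. On the
`B`-coordinate it reads `δ ∘ β = β ∘ ε`; since endomorphisms of a cyclic group are
multiplications and hence commute, this is `β ∘ δ = β ∘ ε`, i.e. `δ = ε`.
-/

/-- `A = ℤ/2 × ℤ/2`, the `(ℤ/2)²`-part of the discriminant groups. -/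
abbrev A2 : Type := ZMod 2 × ZMod 2

/-- `B = ℤ/3`. -/
abbrev B3 : Type := ZMod 3

/-- The ambient group `(A × B) × (A × B × B) = D(S) × D(T)`. -/
abbrev W : Type := (A2 × B3) × (A2 × B3 × B3)

/-- The glueing subgroup `H = {((a,b),(α(a), β(b), 0))}`. -/
def Hsub (α : A2 ≃+ A2) (β : B3 ≃+ B3) : Set W :=
  {p | ∃ a b, p = ((a, b), (α a, β b, 0))}

/-- The glueing subgroup `H' = {((a,b),(α(a), 0, β(b)))}`. -/
def H'sub (α : A2 ≃+ A2) (β : B3 ≃+ B3) : Set W :=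
  {p | ∃ a b, p = ((a, b), (α a, 0, β b))}

/-- The automorphism `T(φ,ε,δ)` of `(A × B) × (A × B × B)` sending
`((a,b),(a',b',b''))` to `((φ(a), ε(b)), (a', δ(b'), δ(b'')))`. -/
def Tmap (φ : A2 ≃+ A2) (ε δ : B3 ≃+ B3) : W → W :=
  fun p => ((φ p.1.1, ε p.1.2), (p.2.1, δ p.2.2.1, δ p.2.2.2))

namespace ZMod

variable {n : ℕ} {F : Type*} [FunLike F (ZMod n) (ZMod n)] [AddMonoidHomClass F (ZMod n) (ZMod n)]

theorem map_eq_mul_map_one (f : F) (x : ZMod n) : f x = x * f 1 := by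
  have h := map_zsmul f (x.cast : ℤ) 1
  rwa [zsmul_one, intCast_zmod_cast, zsmul_eq_mul, intCast_zmod_cast] at h

theorem map_map_comm (f g : F) (x : ZMod n) : f (g x) = g (f x) := by
  rw [map_eq_mul_map_one f, map_eq_mul_map_one g, map_eq_mul_map_one g (f x),
    map_eq_mul_map_one f x, mul_right_comm]

end ZMod

theorem Set.image_prodMap_range_graph_eq_iff {X Y : Type*} {σ : X → X}
    (hσ : Function.Surjective σ) (τ : Y → Y) (γ : X → Y) :
    Prod.map σ τ '' range (fun x => (x, γ x)) = range (fun x => (x, γ x)) ↔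
      ∀ x, τ (γ x) = γ (σ x) := by
  rw [← range_comp]
  constructor
  · intro h x
    obtain ⟨y, hy⟩ : (σ x, τ (γ x)) ∈ range (fun x => (x, γ x)) := h ▸ ⟨x, rfl⟩
    rw [Prod.mk.injEq] at hy
    rw [← hy.2, hy.1]
  · intro h
    simp only [Function.comp_def, Prod.map_apply, h]
    exact hσ.range_comp (fun x => (x, γ x))

theorem Tmap_eq_prodMap (φ : A2 ≃+ A2) (ε δ : B3 ≃+ B3) :
    Tmap φ ε δ = Prod.map (Prod.map φ ε) (Prod.map id (Prod.map δ δ)) := rfl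

theorem Hsub_eq_range (α : A2 ≃+ A2) (β : B3 ≃+ B3) :
    Hsub α β = Set.range fun x : A2 × B3 => (x, (α x.1, β x.2, (0 : B3))) := by
  ext p
  constructor
  · rintro ⟨a, b, rfl⟩
    exact ⟨(a, b), rfl⟩
  · rintro ⟨⟨a, b⟩, rfl⟩
    exact ⟨a, b, rfl⟩

theorem H'sub_eq_range (α : A2 ≃+ A2) (β : B3 ≃+ B3) :
    H'sub α β = Set.range fun x : A2 × B3 => (x, (α x.1, (0 : B3), β x.2)) := by
  ext p
  constructor
  · rintro ⟨a, b, rfl⟩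
    exact ⟨(a, b), rfl⟩
  · rintro ⟨⟨a, b⟩, rfl⟩
    exact ⟨a, b, rfl⟩

theorem forall_intertwine_iff {M : Type*} [Add M] [Nonempty M] {n : ℕ} (α φ : M ≃+ M)
    (β ε δ : ZMod n ≃+ ZMod n) :
    (∀ a b, α a = α (φ a) ∧ δ (β b) = β (ε b)) ↔ φ = AddEquiv.refl M ∧ ε = δ := by
  simp only [ZMod.map_map_comm δ β, α.injective.eq_iff, β.injective.eq_iff, forall_and,
    forall_const, AddEquiv.ext_iff, AddEquiv.refl_apply, eq_comm]

/-- `T(φ,ε,δ)` maps `H` onto `H` iff `φ = id` and `ε = δ`; likewise for `H'`. -/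
theorem stmt9 (α φ : A2 ≃+ A2) (β ε δ : B3 ≃+ B3) :
    (Tmap φ ε δ '' Hsub α β = Hsub α β ↔ (φ = AddEquiv.refl A2 ∧ ε = δ)) ∧
    (Tmap φ ε δ '' H'sub α β = H'sub α β ↔ (φ = AddEquiv.refl A2 ∧ ε = δ)) := by
  have hσ : Function.Surjective (Prod.map φ ε) := (AddEquiv.prodCongr φ ε).surjective
  rw [Tmap_eq_prodMap, Hsub_eq_range, H'sub_eq_range, Set.image_prodMap_range_graph_eq_iff hσ,
    Set.image_prodMap_range_graph_eq_iff hσ, ← forall_intertwine_iff α φ β ε δ]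
  simp
end
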